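/- arXiv:1605.04851 — 2 statements merged into one kernel-verified Lean document; each statement's English description precedes it below -/
import Mathlib

section
/- Let k* = max{ D(P₂‖P₁)/D*, D(P₁‖P₂)/D* }. For every γ ∈ (0, D*), every integer k ≥ k*, and the two-phase test with phase-II parameter λ = λ* (so α = 0) and λ₁, λ₂ chosen with D(P^(λ₁)‖P₂) = γ and D(P^(λ₂)‖P₁) = γ, one has limsup_{n→∞} (1/n) log P₁(A₂^τ) ≤ −E₁(γ) and limsup_{n→∞} (1/n) log P₂(A₁^τ) ≤ −E₂(γ); hence this test achieves every (E₁,E₂) with E₁ ≤ E₁(γ) and E₂ ≤ E₂(γ). -/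
open Real Filter Finset MeasureTheory
open scoped Classical

variable {𝒳 : Type*} [Fintype 𝒳] [DecidableEq 𝒳] [Nonempty 𝒳]

/-- Kullback–Leibler divergence `D(Q‖P)` between pmfs on a finite alphabet. -/
noncomputable def kl (Q P : 𝒳 → ℝ) : ℝ :=
  ∑ x, Q x * Real.log (Q x / P x)

/-- The `λ`-tilted distribution `P^(λ)` of `P₁` and `P₂`. -/
noncomputable def tilt (P₁ P₂ : 𝒳 → ℝ) (l : ℝ) : 𝒳 → ℝ :=
  fun x => P₁ x ^ (1 - l) * P₂ x ^ l / ∑ a, P₁ a ^ (1 - l) * P₂ a ^ l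

/-- Probability of a set of length-`N` sample paths under i.i.d. sampling from `P`. -/
noncomputable def prodProb (P : 𝒳 → ℝ) {N : ℕ} (S : Set (Fin N → 𝒳)) : ℝ :=
  ∑ ω : Fin N → 𝒳, S.indicator (fun ω' => ∏ i, P (ω' i)) ω

/-- The fixed-length error-exponent region `R_FD`. -/
def RFD (P₁ P₂ : 𝒳 → ℝ) : Set (ℝ × ℝ) :=
  {p | 0 ≤ p.1 ∧ 0 ≤ p.2 ∧
    ∃ l ∈ Set.Icc (0:ℝ) 1,
      p.1 ≤ kl (tilt P₁ P₂ l) P₁ ∧ p.2 ≤ kl (tilt P₁ P₂ l) P₂}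

/-- `E₁(γ) = max{D(P^(λ)‖P₁) : λ ∈ [0,1], D(P^(λ)‖P₂) ≥ γ}` (sup of the empty set is 0). -/
noncomputable def E1exp (P₁ P₂ : 𝒳 → ℝ) (γ : ℝ) : ℝ :=
  sSup {E | ∃ l ∈ Set.Icc (0:ℝ) 1, γ ≤ kl (tilt P₁ P₂ l) P₂ ∧ E = kl (tilt P₁ P₂ l) P₁}

/-- `E₂(γ) = max{D(P^(λ)‖P₂) : λ ∈ [0,1], D(P^(λ)‖P₁) ≥ γ}` (sup of the empty set is 0). -/
noncomputable def E2exp (P₁ P₂ : 𝒳 → ℝ) (γ : ℝ) : ℝ :=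
  sSup {E | ∃ l ∈ Set.Icc (0:ℝ) 1, γ ≤ kl (tilt P₁ P₂ l) P₁ ∧ E = kl (tilt P₁ P₂ l) P₂}

/-- A sequential hypothesis test whose stopping time is bounded by `N`:
a stopping time `τ` for the coordinate filtration, together with decision events
`A1`, `A2` that are determined by the samples observed up to time `τ`,
are disjoint, and exhaust the sample space. -/
structure HypTest (𝒳 : Type*) (N : ℕ) where
  τ : (Fin N → 𝒳) → ℕ
  A1 : Set (Fin N → 𝒳)
  A2 : Set (Fin N → 𝒳)
  tau_le : ∀ ω, τ ω ≤ N
  stopping : ∀ ω ω', (∀ i : Fin N, (i : ℕ) < τ ω → ω i = ω' i) → τ ω' = τ ω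
  adapted1 : ∀ ω ω', (∀ i : Fin N, (i : ℕ) < τ ω → ω i = ω' i) → (ω ∈ A1 ↔ ω' ∈ A1)
  adapted2 : ∀ ω ω', (∀ i : Fin N, (i : ℕ) < τ ω → ω i = ω' i) → (ω ∈ A2 ↔ ω' ∈ A2)
  disj : Disjoint A1 A2
  exhaust : A1 ∪ A2 = Set.univ

/-- `(E₁, E₂)` is achievable by `γ`-almost-fixed-length tests. -/
def AFLAchievable (P₁ P₂ : 𝒳 → ℝ) (γ E₁ E₂ : ℝ) : Prop :=
  0 ≤ E₁ ∧ 0 ≤ E₂ ∧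
  ∃ c : ℝ, 0 < c ∧ ∃ l : ℕ, 0 < l ∧
    ∀ δ : ℝ, 0 < δ → ∃ n₀ : ℕ, ∀ n : ℕ, n₀ ≤ n →
      ∃ N : ℕ, (N : ℝ) ≤ c * (n : ℝ) ^ l ∧
        ∃ T : HypTest 𝒳 N,
          prodProb P₁ {ω | n < T.τ ω} ≤ Real.exp (-(γ * n)) ∧
          prodProb P₂ {ω | n < T.τ ω} ≤ Real.exp (-(γ * n)) ∧
          prodProb P₁ T.A2 ≤ Real.exp (-((E₁ - δ) * n)) ∧
          prodProb P₂ T.A1 ≤ Real.exp (-((E₂ - δ) * n))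

/-- `(E₁, E₂, E_Ω)` is achievable by fixed-length tests with a rejection option. -/
def RejAchievable (P₁ P₂ : 𝒳 → ℝ) (E₁ E₂ EΩ : ℝ) : Prop :=
  0 ≤ E₁ ∧ 0 ≤ E₂ ∧ 0 ≤ EΩ ∧
  ∀ δ : ℝ, 0 < δ → ∃ n₀ : ℕ, ∀ n : ℕ, n₀ ≤ n →
    ∃ A1 A2 AΩ : Set (Fin n → 𝒳),
      Disjoint A1 A2 ∧ Disjoint A1 AΩ ∧ Disjoint A2 AΩ ∧ A1 ∪ A2 ∪ AΩ = Set.univ ∧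
      prodProb P₁ A2 ≤ Real.exp (-((E₁ - δ) * n)) ∧
      prodProb P₂ A1 ≤ Real.exp (-((E₂ - δ) * n)) ∧
      prodProb P₁ AΩ + prodProb P₂ AΩ ≤ Real.exp (-((EΩ - δ) * n))

/-- Sum of the log-likelihood ratios of the first `n` samples. -/
noncomputable def S1 (P₁ P₂ : 𝒳 → ℝ) (n : ℕ) {N : ℕ} (ω : Fin N → 𝒳) : ℝ :=
  ∑ i ∈ Finset.univ.filter (fun i : Fin N => (i : ℕ) < n),
    Real.log (P₁ (ω i) / P₂ (ω i))

/-- Sum of the log-likelihood ratios of the samples after time `n`. -/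
noncomputable def S2 (P₁ P₂ : 𝒳 → ℝ) (n : ℕ) {N : ℕ} (ω : Fin N → 𝒳) : ℝ :=
  ∑ i ∈ Finset.univ.filter (fun i : Fin N => n ≤ (i : ℕ)),
    Real.log (P₁ (ω i) / P₂ (ω i))

/-- Event that the two-phase test (phase-one thresholds `α₁ > β₁`, phase-two threshold `α`)
chooses `H₁`. -/
def twoPhaseA1 (P₁ P₂ : 𝒳 → ℝ) (k n : ℕ) (α₁ β₁ α : ℝ) : Set (Fin ((k + 1) * n) → 𝒳) :=
  {ω | α₁ ≤ S1 P₁ P₂ n ω / n ∨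
    (β₁ < S1 P₁ P₂ n ω / n ∧ S1 P₁ P₂ n ω / n < α₁ ∧ α ≤ S2 P₁ P₂ n ω / (k * n))}

/-- Event that the two-phase test chooses `H₂`. -/
def twoPhaseA2 (P₁ P₂ : 𝒳 → ℝ) (k n : ℕ) (α₁ β₁ α : ℝ) : Set (Fin ((k + 1) * n) → 𝒳) :=
  {ω | S1 P₁ P₂ n ω / n ≤ β₁ ∨
    (β₁ < S1 P₁ P₂ n ω / n ∧ S1 P₁ P₂ n ω / n < α₁ ∧ S2 P₁ P₂ n ω / (k * n) < α)}

/-- Stopping time of the two-phase test: `n` if phase one is decisive, `(k+1)n` otherwise. -/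
noncomputable def twoPhaseTau (P₁ P₂ : 𝒳 → ℝ) (k n : ℕ) (α₁ β₁ : ℝ)
    (ω : Fin ((k + 1) * n) → 𝒳) : ℕ :=
  if β₁ < S1 P₁ P₂ n ω / n ∧ S1 P₁ P₂ n ω / n < α₁ then (k + 1) * n else n

/-! Write `Z(λ) = Σ P₁^(1−λ) P₂^λ` (`tiltNorm`) and `M(λ)` (`tiltMean`) for the `P^(λ)`-mean of
the log-likelihood ratio `log (P₁/P₂)`; every threshold `D(P^(λ)‖P₂) − D(P^(λ)‖P₁)` of the test
equals `M(λ)`, so the second-phase threshold is `M(λ*) = 0`. A Chernoff bound with tilt `λ` bounds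
the `P₁`-probability that `m` log-likelihood ratios average below `M(λ)` by
`exp(−m D(P^(λ)‖P₁))`, and symmetrically under `P₂`. Hence
`P₁(A₂) ≤ exp(−n D(P^(λ₁)‖P₁)) + exp(−kn D*)`. Convexity of `log Z`, whose derivative is `−M`,
makes `M` antitone and shows that `E₁(γ)` is attained at `λ₁` and is at most
`D(P₂‖P₁) ≤ k D*`, so both terms decay at rate at least `E₁(γ)`. The case of `P₂(A₁)` is
symmetric. -/

set_option linter.unusedSectionVars false

noncomputable def logLikRatio (P₁ P₂ : 𝒳 → ℝ) (x : 𝒳) : ℝ := log (P₁ x / P₂ x)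

noncomputable def tiltNorm (P₁ P₂ : 𝒳 → ℝ) (l : ℝ) : ℝ := ∑ a, P₁ a ^ (1 - l) * P₂ a ^ l

noncomputable def tiltMean (P₁ P₂ : 𝒳 → ℝ) (l : ℝ) : ℝ := ∑ x, tilt P₁ P₂ l x * logLikRatio P₁ P₂ x

lemma kl_self (P : 𝒳 → ℝ) : kl P P = 0 := by
  refine sum_eq_zero fun x _ => ?_
  rcases eq_or_ne (P x) 0 with h | h
  · rw [h, zero_mul]
  · rw [div_self h, log_one, mul_zero]

lemma kl_sub_kl_eq_sum_mul_logLikRatio {Q P₁ P₂ : 𝒳 → ℝ} (hQ : ∀ x, 0 < Q x)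
    (h₁ : ∀ x, 0 < P₁ x) (h₂ : ∀ x, 0 < P₂ x) :
    kl Q P₂ - kl Q P₁ = ∑ x, Q x * logLikRatio P₁ P₂ x := by
  rw [kl, kl, ← sum_sub_distrib]
  refine sum_congr rfl fun x _ => ?_
  rw [logLikRatio, ← mul_sub, ← log_div (div_pos (hQ x) (h₂ x)).ne' (div_pos (hQ x) (h₁ x)).ne',
    div_div_div_cancel_left' _ _ (hQ x).ne']

section TiltedFamily

variable {P₁ P₂ : 𝒳 → ℝ}

lemma mul_exp_logLikRatio (h₁ : ∀ x, 0 < P₁ x) (h₂ : ∀ x, 0 < P₂ x) (x : 𝒳) :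
    P₂ x * exp (logLikRatio P₁ P₂ x) = P₁ x := by
  rw [logLikRatio, exp_log (div_pos (h₁ x) (h₂ x)), mul_div_cancel₀ _ (h₂ x).ne']

lemma rpow_mul_rpow_eq_mul_exp_logLikRatio (h₁ : ∀ x, 0 < P₁ x) (h₂ : ∀ x, 0 < P₂ x)
    (l : ℝ) (x : 𝒳) :
    P₁ x ^ (1 - l) * P₂ x ^ l = P₁ x * exp (-(l * logLikRatio P₁ P₂ x)) := by
  calc P₁ x ^ (1 - l) * P₂ x ^ l = exp (log (P₁ x) + -(l * logLikRatio P₁ P₂ x)) := by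
        rw [rpow_def_of_pos (h₁ x), rpow_def_of_pos (h₂ x), ← exp_add, logLikRatio,
          log_div (h₁ x).ne' (h₂ x).ne']
        ring_nf
    _ = P₁ x * exp (-(l * logLikRatio P₁ P₂ x)) := by rw [exp_add, exp_log (h₁ x)]

lemma tiltNorm_eq_sum_left (h₁ : ∀ x, 0 < P₁ x) (h₂ : ∀ x, 0 < P₂ x) (l : ℝ) :
    tiltNorm P₁ P₂ l = ∑ x, P₁ x * exp (-(l * logLikRatio P₁ P₂ x)) :=
  sum_congr rfl fun x _ => rpow_mul_rpow_eq_mul_exp_logLikRatio h₁ h₂ l x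

lemma tiltNorm_eq_sum_right (h₁ : ∀ x, 0 < P₁ x) (h₂ : ∀ x, 0 < P₂ x) (l : ℝ) :
    tiltNorm P₁ P₂ l = ∑ x, P₂ x * exp (-((1 - l) * -logLikRatio P₁ P₂ x)) := by
  rw [tiltNorm_eq_sum_left h₁ h₂]
  refine sum_congr rfl fun x _ => ?_
  rw [← mul_exp_logLikRatio h₁ h₂ x, mul_assoc, ← exp_add]
  ring_nf

lemma tiltNorm_pos (h₁ : ∀ x, 0 < P₁ x) (h₂ : ∀ x, 0 < P₂ x) (l : ℝ) : 0 < tiltNorm P₁ P₂ l :=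
  sum_pos (fun x _ => mul_pos (rpow_pos_of_pos (h₁ x) _) (rpow_pos_of_pos (h₂ x) _))
    univ_nonempty

lemma tilt_eq (h₁ : ∀ x, 0 < P₁ x) (h₂ : ∀ x, 0 < P₂ x) (l : ℝ) (x : 𝒳) :
    tilt P₁ P₂ l x = P₁ x * exp (-(l * logLikRatio P₁ P₂ x)) / tiltNorm P₁ P₂ l := by
  rw [← rpow_mul_rpow_eq_mul_exp_logLikRatio h₁ h₂]
  rfl

lemma tilt_pos (h₁ : ∀ x, 0 < P₁ x) (h₂ : ∀ x, 0 < P₂ x) (l : ℝ) (x : 𝒳) :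
    0 < tilt P₁ P₂ l x := by
  rw [tilt_eq h₁ h₂]
  exact div_pos (mul_pos (h₁ x) (exp_pos _)) (tiltNorm_pos h₁ h₂ l)

lemma sum_tilt (h₁ : ∀ x, 0 < P₁ x) (h₂ : ∀ x, 0 < P₂ x) (l : ℝ) : ∑ x, tilt P₁ P₂ l x = 1 := by
  simp only [tilt_eq h₁ h₂]
  rw [← sum_div, ← tiltNorm_eq_sum_left h₁ h₂, div_self (tiltNorm_pos h₁ h₂ l).ne']

lemma tilt_zero (h₁s : ∑ x, P₁ x = 1) : tilt P₁ P₂ 0 = P₁ := by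
  funext x
  simp [tilt, h₁s]

lemma tilt_one (h₂s : ∑ x, P₂ x = 1) : tilt P₁ P₂ 1 = P₂ := by
  funext x
  simp [tilt, h₂s]

lemma kl_tilt_left (h₁ : ∀ x, 0 < P₁ x) (h₂ : ∀ x, 0 < P₂ x) (l : ℝ) :
    kl (tilt P₁ P₂ l) P₁ = -(l * tiltMean P₁ P₂ l) - log (tiltNorm P₁ P₂ l) := by
  have hlog : ∀ x, log (tilt P₁ P₂ l x / P₁ x)
      = -(l * logLikRatio P₁ P₂ x) - log (tiltNorm P₁ P₂ l) := by
    intro x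
    rw [tilt_eq h₁ h₂, div_right_comm, mul_div_cancel_left₀ _ (h₁ x).ne',
      log_div (exp_pos _).ne' (tiltNorm_pos h₁ h₂ l).ne', log_exp]
  simp only [kl, hlog, mul_sub, sum_sub_distrib, ← sum_mul, sum_tilt h₁ h₂, one_mul, tiltMean,
    mul_neg, sum_neg_distrib, mul_left_comm _ l, ← mul_sum]

lemma kl_tilt_right_sub_kl_tilt_left (h₁ : ∀ x, 0 < P₁ x) (h₂ : ∀ x, 0 < P₂ x) (l : ℝ) :
    kl (tilt P₁ P₂ l) P₂ - kl (tilt P₁ P₂ l) P₁ = tiltMean P₁ P₂ l :=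
  kl_sub_kl_eq_sum_mul_logLikRatio (tilt_pos h₁ h₂ l) h₁ h₂

lemma kl_tilt_right (h₁ : ∀ x, 0 < P₁ x) (h₂ : ∀ x, 0 < P₂ x) (l : ℝ) :
    kl (tilt P₁ P₂ l) P₂ = (1 - l) * tiltMean P₁ P₂ l - log (tiltNorm P₁ P₂ l) := by
  linarith [kl_tilt_right_sub_kl_tilt_left h₁ h₂ l, kl_tilt_left h₁ h₂ l]

end TiltedFamily

section Convexity

variable {P₁ P₂ : 𝒳 → ℝ}

/-- Tangent line of the convex function `log Z`; Jensen's inequality for `exp` under `P^(a)`. -/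
lemma log_tiltNorm_sub_mul_tiltMean_le (h₁ : ∀ x, 0 < P₁ x) (h₂ : ∀ x, 0 < P₂ x) (a b : ℝ) :
    log (tiltNorm P₁ P₂ a) - (b - a) * tiltMean P₁ P₂ a ≤ log (tiltNorm P₁ P₂ b) := by
  have hZa := tiltNorm_pos h₁ h₂ a
  have hmean : ∑ x, tilt P₁ P₂ a x * -((b - a) * logLikRatio P₁ P₂ x)
      = -((b - a) * tiltMean P₁ P₂ a) := by
    rw [tiltMean, mul_sum, ← sum_neg_distrib]
    exact sum_congr rfl fun x _ => by ring
  have hratio : ∑ x, tilt P₁ P₂ a x * exp (-((b - a) * logLikRatio P₁ P₂ x))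
      = tiltNorm P₁ P₂ b / tiltNorm P₁ P₂ a := by
    rw [tiltNorm_eq_sum_left h₁ h₂ b, sum_div]
    refine sum_congr rfl fun x _ => ?_
    rw [tilt_eq h₁ h₂, div_mul_eq_mul_div, mul_assoc, ← exp_add]
    ring_nf
  have hjensen : exp (-((b - a) * tiltMean P₁ P₂ a))
      ≤ tiltNorm P₁ P₂ b / tiltNorm P₁ P₂ a := by
    rw [← hmean, ← hratio]
    simpa only [smul_eq_mul] using convexOn_exp.map_sum_le (t := univ)
      (fun x _ => (tilt_pos h₁ h₂ a x).le) (sum_tilt h₁ h₂ a) (fun x _ => Set.mem_univ _)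
  have := (le_log_iff_exp_le (div_pos (tiltNorm_pos h₁ h₂ b) hZa)).2 hjensen
  rw [log_div (tiltNorm_pos h₁ h₂ b).ne' hZa.ne'] at this
  linarith

lemma tiltMean_antitone (h₁ : ∀ x, 0 < P₁ x) (h₂ : ∀ x, 0 < P₂ x) :
    Antitone (tiltMean P₁ P₂) := by
  intro a b hab
  have hab' := log_tiltNorm_sub_mul_tiltMean_le h₁ h₂ a b
  have hba' := log_tiltNorm_sub_mul_tiltMean_le h₁ h₂ b a
  rcases hab.eq_or_lt with rfl | hlt
  · rfl
  · by_contra! h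
    nlinarith

lemma kl_tilt_left_sub_le (h₁ : ∀ x, 0 < P₁ x) (h₂ : ∀ x, 0 < P₂ x) (a l : ℝ) :
    kl (tilt P₁ P₂ l) P₁ - kl (tilt P₁ P₂ a) P₁ ≤ l * (tiltMean P₁ P₂ a - tiltMean P₁ P₂ l) := by
  rw [kl_tilt_left h₁ h₂, kl_tilt_left h₁ h₂]
  linarith [log_tiltNorm_sub_mul_tiltMean_le h₁ h₂ a l]

lemma kl_tilt_right_sub_le (h₁ : ∀ x, 0 < P₁ x) (h₂ : ∀ x, 0 < P₂ x) (a l : ℝ) :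
    kl (tilt P₁ P₂ l) P₂ - kl (tilt P₁ P₂ a) P₂
      ≤ (1 - l) * (tiltMean P₁ P₂ l - tiltMean P₁ P₂ a) := by
  rw [kl_tilt_right h₁ h₂, kl_tilt_right h₁ h₂]
  linarith [log_tiltNorm_sub_mul_tiltMean_le h₁ h₂ a l]

lemma E1exp_le (h₁ : ∀ x, 0 < P₁ x) (h₂ : ∀ x, 0 < P₂ x) (h₂s : ∑ x, P₂ x = 1)
    {γ l₁ : ℝ} (hγ : 0 < γ) (hl₁ : l₁ ∈ Set.Icc (0 : ℝ) 1) (hg : kl (tilt P₁ P₂ l₁) P₂ = γ) :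
    E1exp P₁ P₂ γ ≤ min (kl (tilt P₁ P₂ l₁) P₁) (kl P₂ P₁) := by
  refine csSup_le ⟨_, l₁, hl₁, hg.ge, rfl⟩ ?_
  rintro _ ⟨l, hl, hγl, rfl⟩
  have hl1 : l < 1 := by
    refine hl.2.lt_of_ne ?_
    rintro rfl
    rw [tilt_one h₂s, kl_self] at hγl
    linarith
  have hM : tiltMean P₁ P₂ l₁ ≤ tiltMean P₁ P₂ l := by
    by_contra! h
    nlinarith [kl_tilt_right_sub_le h₁ h₂ l₁ l]
  have hM1 : tiltMean P₁ P₂ 1 ≤ tiltMean P₁ P₂ l := tiltMean_antitone h₁ h₂ hl.2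
  have h1 := kl_tilt_left_sub_le h₁ h₂ 1 l
  rw [tilt_one h₂s] at h1
  exact le_min (by nlinarith [kl_tilt_left_sub_le h₁ h₂ l₁ l, hl.1]) (by nlinarith [hl.1])

lemma E2exp_le (h₁ : ∀ x, 0 < P₁ x) (h₂ : ∀ x, 0 < P₂ x) (h₁s : ∑ x, P₁ x = 1)
    {γ l₂ : ℝ} (hγ : 0 < γ) (hl₂ : l₂ ∈ Set.Icc (0 : ℝ) 1) (hg : kl (tilt P₁ P₂ l₂) P₁ = γ) :
    E2exp P₁ P₂ γ ≤ min (kl (tilt P₁ P₂ l₂) P₂) (kl P₁ P₂) := by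
  refine csSup_le ⟨_, l₂, hl₂, hg.ge, rfl⟩ ?_
  rintro _ ⟨l, hl, hγl, rfl⟩
  have hl0 : 0 < l := by
    refine hl.1.lt_of_ne ?_
    rintro rfl
    rw [tilt_zero h₁s, kl_self] at hγl
    linarith
  have hM : tiltMean P₁ P₂ l ≤ tiltMean P₁ P₂ l₂ := by
    by_contra! h
    nlinarith [kl_tilt_left_sub_le h₁ h₂ l₂ l]
  have hM0 : tiltMean P₁ P₂ l ≤ tiltMean P₁ P₂ 0 := tiltMean_antitone h₁ h₂ hl.1
  have h0 := kl_tilt_right_sub_le h₁ h₂ 0 l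
  rw [tilt_zero h₁s] at h0
  exact le_min (by nlinarith [kl_tilt_right_sub_le h₁ h₂ l₂ l, hl.2]) (by nlinarith [hl.2])

lemma exists_logLikRatio_le_tiltMean (h₁ : ∀ x, 0 < P₁ x) (h₂ : ∀ x, 0 < P₂ x) (l : ℝ) :
    ∃ x, logLikRatio P₁ P₂ x ≤ tiltMean P₁ P₂ l := by
  obtain ⟨x, -, hx⟩ := exists_le_of_sum_le (s := univ) univ_nonempty
    (f := fun x => tilt P₁ P₂ l x * logLikRatio P₁ P₂ x)
    (g := fun x => tilt P₁ P₂ l x * tiltMean P₁ P₂ l)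
    (by rw [← sum_mul, sum_tilt h₁ h₂, one_mul, tiltMean])
  exact ⟨x, le_of_mul_le_mul_left hx (tilt_pos h₁ h₂ l x)⟩

lemma exists_tiltMean_le_logLikRatio (h₁ : ∀ x, 0 < P₁ x) (h₂ : ∀ x, 0 < P₂ x) (l : ℝ) :
    ∃ x, tiltMean P₁ P₂ l ≤ logLikRatio P₁ P₂ x := by
  obtain ⟨x, -, hx⟩ := exists_le_of_sum_le (s := univ) univ_nonempty
    (f := fun x => tilt P₁ P₂ l x * tiltMean P₁ P₂ l)
    (g := fun x => tilt P₁ P₂ l x * logLikRatio P₁ P₂ x)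
    (by rw [← sum_mul, sum_tilt h₁ h₂, one_mul, tiltMean])
  exact ⟨x, le_of_mul_le_mul_left hx (tilt_pos h₁ h₂ l x)⟩

end Convexity

section ProductProbability

variable {N : ℕ} {P : 𝒳 → ℝ}

lemma prodProb_mono (hP : ∀ x, 0 ≤ P x) {S T : Set (Fin N → 𝒳)} (hST : S ⊆ T) :
    prodProb P S ≤ prodProb P T :=
  sum_le_sum fun ω _ => Set.indicator_le_indicator_of_subset hST
    (fun ω' => prod_nonneg fun i _ => hP (ω' i)) ω

lemma prodProb_union_le (hP : ∀ x, 0 ≤ P x) (S T : Set (Fin N → 𝒳)) :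
    prodProb P (S ∪ T) ≤ prodProb P S + prodProb P T := by
  rw [prodProb, prodProb, prodProb, ← sum_add_distrib]
  refine sum_le_sum fun ω _ => ?_
  have h := congrFun (Set.indicator_union_add_inter (fun ω' => ∏ i, P (ω' i)) S T) ω
  have h₀ : 0 ≤ (S ∩ T).indicator (fun ω' => ∏ i, P (ω' i)) ω :=
    Set.indicator_nonneg (fun ω' _ => prod_nonneg fun i _ => hP (ω' i)) ω
  simp only [Pi.add_apply] at h
  linarith

lemma pow_le_prodProb_of_const_mem (hP : ∀ x, 0 ≤ P x) {S : Set (Fin N → 𝒳)} {x : 𝒳}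
    (hx : (fun _ => x) ∈ S) : P x ^ N ≤ prodProb P S := by
  have h := single_le_sum (f := fun ω => S.indicator (fun ω' => ∏ i, P (ω' i)) ω)
    (fun ω _ => Set.indicator_nonneg (fun ω' _ => prod_nonneg fun i _ => hP (ω' i)) ω)
    (mem_univ (fun _ => x))
  rwa [Set.indicator_of_mem hx, prod_const, card_univ, Fintype.card_fin] at h

/-- Chernoff's bound: Markov's inequality applied to `exp (θ * (c - ∑ i ∈ s, φ (ω i)))`. -/
lemma prodProb_sum_le_le_exp_mul_pow (hP : ∀ x, 0 ≤ P x) (hP₁ : ∑ x, P x = 1)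
    (s : Finset (Fin N)) (φ : 𝒳 → ℝ) (c : ℝ) {θ : ℝ} (hθ : 0 ≤ θ) :
    prodProb P {ω | ∑ i ∈ s, φ (ω i) ≤ c}
      ≤ exp (θ * c) * (∑ x, P x * exp (-(θ * φ x))) ^ s.card := by
  set g : Fin N → 𝒳 → ℝ := fun i x => P x * if i ∈ s then exp (-(θ * φ x)) else 1
  have hg : ∀ ω : Fin N → 𝒳,
      ∏ i, g i (ω i) = (∏ i, P (ω i)) * exp (-(θ * ∑ i ∈ s, φ (ω i))) := by
    intro ω
    rw [prod_mul_distrib, Fintype.prod_ite_mem, mul_sum, ← sum_neg_distrib, exp_sum]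
  have hpoint : ∀ ω : Fin N → 𝒳, {ω | ∑ i ∈ s, φ (ω i) ≤ c}.indicator (fun ω' => ∏ i, P (ω' i)) ω
      ≤ exp (θ * c) * ∏ i, g i (ω i) := by
    intro ω
    have hprod : 0 ≤ ∏ i, P (ω i) := prod_nonneg fun i _ => hP (ω i)
    rw [hg, mul_left_comm, ← exp_add]
    by_cases hω : ∑ i ∈ s, φ (ω i) ≤ c
    · rw [Set.indicator_of_mem (show ω ∈ {ω | ∑ i ∈ s, φ (ω i) ≤ c} from hω)]
      exact le_mul_of_one_le_right hprod
        (one_le_exp (by nlinarith))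
    · rw [Set.indicator_of_notMem (show ω ∉ {ω | ∑ i ∈ s, φ (ω i) ≤ c} from hω)]
      positivity
  calc prodProb P {ω | ∑ i ∈ s, φ (ω i) ≤ c}
      ≤ ∑ ω : Fin N → 𝒳, exp (θ * c) * ∏ i, g i (ω i) := sum_le_sum fun ω _ => hpoint ω
    _ = exp (θ * c) * ∏ i, ∑ x, g i x := by rw [← mul_sum, Fintype.prod_sum]
    _ = exp (θ * c) * ∏ i, if i ∈ s then ∑ x, P x * exp (-(θ * φ x)) else 1 := by
      congr 1
      refine Fintype.prod_congr _ _ fun i => ?_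
      split_ifs <;> simp [g, *]
    _ = exp (θ * c) * (∑ x, P x * exp (-(θ * φ x))) ^ s.card := by
      rw [Fintype.prod_ite_mem, prod_const]

end ProductProbability

section TwoPhaseTest

variable {P₁ P₂ : 𝒳 → ℝ} {N : ℕ}

lemma prodProb_sum_logLikRatio_le_le (h₁ : ∀ x, 0 < P₁ x) (h₂ : ∀ x, 0 < P₂ x)
    (h₁s : ∑ x, P₁ x = 1) (s : Finset (Fin N)) {l : ℝ} (hl : 0 ≤ l) :
    prodProb P₁ {ω | ∑ i ∈ s, logLikRatio P₁ P₂ (ω i) ≤ s.card * tiltMean P₁ P₂ l}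
      ≤ exp (-(s.card * kl (tilt P₁ P₂ l) P₁)) := by
  refine (prodProb_sum_le_le_exp_mul_pow (fun x => (h₁ x).le) h₁s s _ _ hl).trans_eq ?_
  rw [← tiltNorm_eq_sum_left h₁ h₂, ← exp_log (tiltNorm_pos h₁ h₂ l), ← exp_nat_mul,
    ← exp_add, kl_tilt_left h₁ h₂]
  ring_nf

lemma prodProb_le_sum_logLikRatio_le (h₁ : ∀ x, 0 < P₁ x) (h₂ : ∀ x, 0 < P₂ x)
    (h₂s : ∑ x, P₂ x = 1) (s : Finset (Fin N)) {l : ℝ} (hl : l ≤ 1) :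
    prodProb P₂ {ω | s.card * tiltMean P₁ P₂ l ≤ ∑ i ∈ s, logLikRatio P₁ P₂ (ω i)}
      ≤ exp (-(s.card * kl (tilt P₁ P₂ l) P₂)) := by
  have h := prodProb_sum_le_le_exp_mul_pow (fun x => (h₂ x).le) h₂s s
    (fun x => -logLikRatio P₁ P₂ x) (-(s.card * tiltMean P₁ P₂ l)) (sub_nonneg.2 hl)
  simp only [sum_neg_distrib, neg_le_neg_iff] at h
  refine h.trans_eq ?_
  rw [← tiltNorm_eq_sum_right h₁ h₂, ← exp_log (tiltNorm_pos h₁ h₂ l), ← exp_nat_mul,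
    ← exp_add, kl_tilt_right h₁ h₂]
  ring_nf

lemma card_filter_val_lt_of_le {n : ℕ} (hn : n ≤ N) : #{i : Fin N | (i : ℕ) < n} = n := by
  rw [Fin.card_filter_val_lt, min_eq_right hn]

lemma card_filter_le_val {n : ℕ} (hn : n ≤ N) : #{i : Fin N | n ≤ (i : ℕ)} = N - n := by
  have h := card_filter_add_card_filter_not (s := (univ : Finset (Fin N))) (fun i => (i : ℕ) < n)
  simp only [not_lt, card_filter_val_lt_of_le hn, card_univ, Fintype.card_fin] at h
  omega

lemma prodProb_twoPhaseA2_le (h₁ : ∀ x, 0 < P₁ x) (h₂ : ∀ x, 0 < P₂ x)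
    (h₁s : ∑ x, P₁ x = 1) {k n : ℕ} (hk : 0 < k) (hn : 0 < n) (α₁ : ℝ) {l₁ l : ℝ}
    (hl₁ : 0 ≤ l₁) (hl : 0 ≤ l) :
    prodProb P₁ (twoPhaseA2 P₁ P₂ k n α₁ (tiltMean P₁ P₂ l₁) (tiltMean P₁ P₂ l))
      ≤ exp (-(n * kl (tilt P₁ P₂ l₁) P₁)) + exp (-(n * (k * kl (tilt P₁ P₂ l) P₁))) := by
  have hnN : n ≤ (k + 1) * n := Nat.le_mul_of_pos_left n k.succ_pos
  have hcard₂ : #{i : Fin ((k + 1) * n) | n ≤ (i : ℕ)} = k * n := by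
    rw [card_filter_le_val hnN, add_one_mul, Nat.add_sub_cancel]
  have e₁ := prodProb_sum_logLikRatio_le_le h₁ h₂ h₁s
    {i : Fin ((k + 1) * n) | (i : ℕ) < n} hl₁
  have e₂ := prodProb_sum_logLikRatio_le_le h₁ h₂ h₁s
    {i : Fin ((k + 1) * n) | n ≤ (i : ℕ)} hl
  rw [card_filter_val_lt_of_le hnN] at e₁
  rw [hcard₂] at e₂
  push_cast at e₂
  have hsub : twoPhaseA2 P₁ P₂ k n α₁ (tiltMean P₁ P₂ l₁) (tiltMean P₁ P₂ l)
      ⊆ {ω | S1 P₁ P₂ n ω ≤ n * tiltMean P₁ P₂ l₁}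
        ∪ {ω | S2 P₁ P₂ n ω ≤ k * n * tiltMean P₁ P₂ l} := by
    rintro ω (h | ⟨-, -, h⟩)
    · exact Or.inl ((div_le_iff₀ (by positivity)).1 h |>.trans_eq (mul_comm _ _))
    · exact Or.inr ((div_lt_iff₀ (by positivity)).1 h |>.le.trans_eq (mul_comm _ _))
  calc _ ≤ _ := prodProb_mono (fun x => (h₁ x).le) hsub
    _ ≤ _ := prodProb_union_le (fun x => (h₁ x).le) _ _
    _ ≤ _ := add_le_add e₁ (e₂.trans_eq (by ring_nf))

lemma prodProb_twoPhaseA1_le (h₁ : ∀ x, 0 < P₁ x) (h₂ : ∀ x, 0 < P₂ x)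
    (h₂s : ∑ x, P₂ x = 1) {k n : ℕ} (hk : 0 < k) (hn : 0 < n) (β₁ : ℝ) {l₂ l : ℝ}
    (hl₂ : l₂ ≤ 1) (hl : l ≤ 1) :
    prodProb P₂ (twoPhaseA1 P₁ P₂ k n (tiltMean P₁ P₂ l₂) β₁ (tiltMean P₁ P₂ l))
      ≤ exp (-(n * kl (tilt P₁ P₂ l₂) P₂)) + exp (-(n * (k * kl (tilt P₁ P₂ l) P₂))) := by
  have hnN : n ≤ (k + 1) * n := Nat.le_mul_of_pos_left n k.succ_pos
  have hcard₂ : #{i : Fin ((k + 1) * n) | n ≤ (i : ℕ)} = k * n := by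
    rw [card_filter_le_val hnN, add_one_mul, Nat.add_sub_cancel]
  have e₁ := prodProb_le_sum_logLikRatio_le h₁ h₂ h₂s
    {i : Fin ((k + 1) * n) | (i : ℕ) < n} hl₂
  have e₂ := prodProb_le_sum_logLikRatio_le h₁ h₂ h₂s
    {i : Fin ((k + 1) * n) | n ≤ (i : ℕ)} hl
  rw [card_filter_val_lt_of_le hnN] at e₁
  rw [hcard₂] at e₂
  push_cast at e₂
  have hsub : twoPhaseA1 P₁ P₂ k n (tiltMean P₁ P₂ l₂) β₁ (tiltMean P₁ P₂ l)
      ⊆ {ω | n * tiltMean P₁ P₂ l₂ ≤ S1 P₁ P₂ n ω}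
        ∪ {ω | k * n * tiltMean P₁ P₂ l ≤ S2 P₁ P₂ n ω} := by
    rintro ω (h | ⟨-, -, h⟩)
    · exact Or.inl ((le_div_iff₀ (by positivity)).1 h |>.trans_eq' (mul_comm _ _))
    · exact Or.inr ((le_div_iff₀ (by positivity)).1 h |>.trans_eq' (mul_comm _ _))
  calc _ ≤ _ := prodProb_mono (fun x => (h₂ x).le) hsub
    _ ≤ _ := prodProb_union_le (fun x => (h₂ x).le) _ _
    _ ≤ _ := add_le_add e₁ (e₂.trans_eq (by ring_nf))

lemma S1_const {n : ℕ} (hn : n ≤ N) (x : 𝒳) :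
    S1 P₁ P₂ n (fun _ : Fin N => x) = n * logLikRatio P₁ P₂ x := by
  rw [S1, sum_const, card_filter_val_lt_of_le hn, nsmul_eq_mul, logLikRatio]

/-- The constant sample path at a point whose log-likelihood ratio lies below the first-phase
lower threshold stops at time `n` and chooses `H₂`. -/
lemma exists_pow_le_prodProb_twoPhaseA2 (h₁ : ∀ x, 0 < P₁ x) (h₂ : ∀ x, 0 < P₂ x)
    (k : ℕ) (α₁ α l₁ : ℝ) : ∃ b > 0, ∀ᶠ n in atTop,
      b ^ n ≤ prodProb P₁ (twoPhaseA2 P₁ P₂ k n α₁ (tiltMean P₁ P₂ l₁) α) := by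
  obtain ⟨x, hx⟩ := exists_logLikRatio_le_tiltMean h₁ h₂ l₁
  refine ⟨P₁ x ^ (k + 1), pow_pos (h₁ x) _, (eventually_gt_atTop 0).mono fun n hn => ?_⟩
  rw [← pow_mul]
  refine pow_le_prodProb_of_const_mem (fun x => (h₁ x).le) (Or.inl ?_)
  rwa [S1_const (Nat.le_mul_of_pos_left n k.succ_pos), mul_div_cancel_left₀ _ (by positivity)]

lemma exists_pow_le_prodProb_twoPhaseA1 (h₁ : ∀ x, 0 < P₁ x) (h₂ : ∀ x, 0 < P₂ x)
    (k : ℕ) (β₁ α l₂ : ℝ) : ∃ b > 0, ∀ᶠ n in atTop,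
      b ^ n ≤ prodProb P₂ (twoPhaseA1 P₁ P₂ k n (tiltMean P₁ P₂ l₂) β₁ α) := by
  obtain ⟨x, hx⟩ := exists_tiltMean_le_logLikRatio h₁ h₂ l₂
  refine ⟨P₂ x ^ (k + 1), pow_pos (h₂ x) _, (eventually_gt_atTop 0).mono fun n hn => ?_⟩
  rw [← pow_mul]
  refine pow_le_prodProb_of_const_mem (fun x => (h₂ x).le) (Or.inl ?_)
  rwa [S1_const (Nat.le_mul_of_pos_left n k.succ_pos), mul_div_cancel_left₀ _ (by positivity)]

end TwoPhaseTest

section Asymptotics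

lemma exp_neg_mul_add_exp_neg_mul_le {n a b E : ℝ} (hn : 0 ≤ n) (ha : E ≤ a) (hb : E ≤ b) :
    exp (-(n * a)) + exp (-(n * b)) ≤ 2 * exp (-(n * E)) := by
  have hna := exp_le_exp.2 (neg_le_neg (mul_le_mul_of_nonneg_left ha hn))
  have hnb := exp_le_exp.2 (neg_le_neg (mul_le_mul_of_nonneg_left hb hn))
  linarith

/-- The lower bound only serves to keep `log (f n) / n` bounded below: otherwise the `limsup`
in `ℝ` takes its junk value. -/
lemma limsup_log_div_le {f : ℕ → ℝ} {b C B : ℝ} (hb : 0 < b) (hC : 0 < C)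
    (hlb : ∀ᶠ n in atTop, b ^ n ≤ f n) (hub : ∀ᶠ n in atTop, f n ≤ C * exp (-(n * B))) :
    limsup (fun n : ℕ => log (f n) / n) atTop ≤ -B := by
  have hlow : ∀ᶠ n : ℕ in atTop, log b ≤ log (f n) / n := by
    filter_upwards [hlb, eventually_gt_atTop 0] with n hn hn0
    rw [le_div_iff₀ (by positivity), mul_comm, ← log_pow]
    exact log_le_log (pow_pos hb n) hn
  have hup : ∀ᶠ n : ℕ in atTop, log (f n) / n ≤ log C / n - B := by
    filter_upwards [hlb, hub, eventually_gt_atTop 0] with n hn hn' hn0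
    rw [div_le_iff₀ (by positivity), sub_mul, div_mul_cancel₀ _ (by positivity)]
    calc log (f n) ≤ log (C * exp (-(n * B))) := log_le_log ((pow_pos hb n).trans_le hn) hn'
      _ = log C - B * n := by rw [log_mul hC.ne' (exp_pos _).ne', log_exp]; ring
  have hlim : Tendsto (fun n : ℕ => log C / n - B) atTop (nhds (-B)) := by
    simpa using (tendsto_const_div_atTop_nhds_zero_nat (log C)).sub_const B
  calc limsup (fun n : ℕ => log (f n) / n) atTop ≤ limsup (fun n : ℕ => log C / n - B) atTop :=
        limsup_le_limsup hup (isCoboundedUnder_le_of_eventually_le atTop hlow)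
          hlim.isBoundedUnder_le
    _ = -B := hlim.limsup_eq

lemma eventually_le_exp_of_le_mul_exp {f : ℕ → ℝ} {C B E δ : ℝ} (hC : 0 < C) (hδ : 0 < δ)
    (hEB : E ≤ B) (hub : ∀ᶠ n in atTop, f n ≤ C * exp (-(n * B))) :
    ∀ᶠ n : ℕ in atTop, f n ≤ exp (-((E - δ) * n)) := by
  filter_upwards [hub, tendsto_natCast_atTop_atTop.eventually_ge_atTop (log C / δ)]
    with n hn hnC
  have hlogC : log C ≤ n * δ := (div_le_iff₀ hδ).1 hnC
  refine hn.trans ?_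
  rw [← exp_log hC, ← exp_add]
  exact exp_le_exp.2 (by nlinarith [(n.cast_nonneg : (0 : ℝ) ≤ n)])

end Asymptotics

theorem twoPhase_achieves_corner_general (P₁ P₂ : 𝒳 → ℝ)
    (h1pos : ∀ x, 0 < P₁ x) (h2pos : ∀ x, 0 < P₂ x)
    (h1sum : ∑ x, P₁ x = 1) (h2sum : ∑ x, P₂ x = 1)
    (ls : ℝ) (hls : ls ∈ Set.Icc (0:ℝ) 1)
    (hchern : kl (tilt P₁ P₂ ls) P₁ = kl (tilt P₁ P₂ ls) P₂)
    (γ : ℝ) (hγ0 : 0 < γ) (hγD : γ < kl (tilt P₁ P₂ ls) P₁)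
    (k : ℕ) (hk : 0 < k)
    (hkstar : max (kl P₂ P₁ / kl (tilt P₁ P₂ ls) P₁)
        (kl P₁ P₂ / kl (tilt P₁ P₂ ls) P₁) ≤ (k : ℝ))
    (l₁ l₂ : ℝ)
    (hl₁ : l₁ ∈ Set.Icc (0:ℝ) 1) (hl₂ : l₂ ∈ Set.Icc (0:ℝ) 1)
    (hg1 : kl (tilt P₁ P₂ l₁) P₂ = γ) (hg2 : kl (tilt P₁ P₂ l₂) P₁ = γ) :
    Filter.limsup (fun n : ℕ =>
        Real.log (prodProb P₁ (twoPhaseA2 P₁ P₂ k n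
          (kl (tilt P₁ P₂ l₂) P₂ - kl (tilt P₁ P₂ l₂) P₁)
          (kl (tilt P₁ P₂ l₁) P₂ - kl (tilt P₁ P₂ l₁) P₁)
          (kl (tilt P₁ P₂ ls) P₂ - kl (tilt P₁ P₂ ls) P₁))) / (n : ℝ))
      Filter.atTop ≤ -(E1exp P₁ P₂ γ) ∧
    Filter.limsup (fun n : ℕ =>
        Real.log (prodProb P₂ (twoPhaseA1 P₁ P₂ k n
          (kl (tilt P₁ P₂ l₂) P₂ - kl (tilt P₁ P₂ l₂) P₁)
          (kl (tilt P₁ P₂ l₁) P₂ - kl (tilt P₁ P₂ l₁) P₁)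
          (kl (tilt P₁ P₂ ls) P₂ - kl (tilt P₁ P₂ ls) P₁))) / (n : ℝ))
      Filter.atTop ≤ -(E2exp P₁ P₂ γ) ∧
    ∀ E₁ E₂ : ℝ, 0 ≤ E₁ → E₁ ≤ E1exp P₁ P₂ γ → 0 ≤ E₂ → E₂ ≤ E2exp P₁ P₂ γ →
      ∀ δ : ℝ, 0 < δ → ∃ n₀ : ℕ, ∀ n : ℕ, n₀ ≤ n →
        prodProb P₁ (twoPhaseA2 P₁ P₂ k n
            (kl (tilt P₁ P₂ l₂) P₂ - kl (tilt P₁ P₂ l₂) P₁)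
            (kl (tilt P₁ P₂ l₁) P₂ - kl (tilt P₁ P₂ l₁) P₁)
            (kl (tilt P₁ P₂ ls) P₂ - kl (tilt P₁ P₂ ls) P₁))
          ≤ Real.exp (-((E₁ - δ) * n)) ∧
        prodProb P₂ (twoPhaseA1 P₁ P₂ k n
            (kl (tilt P₁ P₂ l₂) P₂ - kl (tilt P₁ P₂ l₂) P₁)
            (kl (tilt P₁ P₂ l₁) P₂ - kl (tilt P₁ P₂ l₁) P₁)
            (kl (tilt P₁ P₂ ls) P₂ - kl (tilt P₁ P₂ ls) P₁))
          ≤ Real.exp (-((E₂ - δ) * n)) := by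
  simp only [kl_tilt_right_sub_kl_tilt_left h1pos h2pos]
  have hD : 0 < kl (tilt P₁ P₂ ls) P₁ := hγ0.trans hγD
  have hk₂₁ : kl P₂ P₁ ≤ k * kl (tilt P₁ P₂ ls) P₁ :=
    (div_le_iff₀ hD).1 ((le_max_left _ _).trans hkstar)
  have hk₁₂ : kl P₁ P₂ ≤ k * kl (tilt P₁ P₂ ls) P₂ :=
    hchern ▸ (div_le_iff₀ hD).1 ((le_max_right _ _).trans hkstar)
  have hE₁ := E1exp_le h1pos h2pos h2sum hγ0 hl₁ hg1
  have hE₂ := E2exp_le h1pos h2pos h1sum hγ0 hl₂ hg2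
  have hub₁ : ∀ᶠ n : ℕ in atTop, prodProb P₁ (twoPhaseA2 P₁ P₂ k n (tiltMean P₁ P₂ l₂)
      (tiltMean P₁ P₂ l₁) (tiltMean P₁ P₂ ls)) ≤ 2 * exp (-(n * E1exp P₁ P₂ γ)) :=
    (eventually_gt_atTop 0).mono fun n hn =>
      (prodProb_twoPhaseA2_le h1pos h2pos h1sum hk hn _ hl₁.1 hls.1).trans
        (exp_neg_mul_add_exp_neg_mul_le n.cast_nonneg (hE₁.trans (min_le_left _ _))
          ((hE₁.trans (min_le_right _ _)).trans hk₂₁))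
  have hub₂ : ∀ᶠ n : ℕ in atTop, prodProb P₂ (twoPhaseA1 P₁ P₂ k n (tiltMean P₁ P₂ l₂)
      (tiltMean P₁ P₂ l₁) (tiltMean P₁ P₂ ls)) ≤ 2 * exp (-(n * E2exp P₁ P₂ γ)) :=
    (eventually_gt_atTop 0).mono fun n hn =>
      (prodProb_twoPhaseA1_le h1pos h2pos h2sum hk hn _ hl₂.2 hls.2).trans
        (exp_neg_mul_add_exp_neg_mul_le n.cast_nonneg (hE₂.trans (min_le_left _ _))
          ((hE₂.trans (min_le_right _ _)).trans hk₁₂))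
  obtain ⟨b₁, hb₁, hlb₁⟩ := exists_pow_le_prodProb_twoPhaseA2 h1pos h2pos k
    (tiltMean P₁ P₂ l₂) (tiltMean P₁ P₂ ls) l₁
  obtain ⟨b₂, hb₂, hlb₂⟩ := exists_pow_le_prodProb_twoPhaseA1 h1pos h2pos k
    (tiltMean P₁ P₂ l₁) (tiltMean P₁ P₂ ls) l₂
  refine ⟨limsup_log_div_le hb₁ two_pos hlb₁ hub₁, limsup_log_div_le hb₂ two_pos hlb₂ hub₂,
    fun E₁ E₂ _ hE₁' _ hE₂' δ hδ => eventually_atTop.1 ?_⟩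
  exact (eventually_le_exp_of_le_mul_exp two_pos hδ hE₁' hub₁).and
    (eventually_le_exp_of_le_mul_exp two_pos hδ hE₂' hub₂)

/-- Corollary: for `k ≥ k* = max{D(P₂‖P₁), D(P₁‖P₂)}/D*` and phase-two parameter `λ = λ*`
(so `α = 0`), the two-phase test attains the exponents `(E₁(γ), E₂(γ))`, and hence
achieves every `(E₁, E₂)` with `E₁ ≤ E₁(γ)` and `E₂ ≤ E₂(γ)`. -/
theorem twoPhase_achieves_corner (P₁ P₂ : 𝒳 → ℝ)
    (h1pos : ∀ x, 0 < P₁ x) (h2pos : ∀ x, 0 < P₂ x)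
    (h1sum : ∑ x, P₁ x = 1) (h2sum : ∑ x, P₂ x = 1)
    (hne : P₁ ≠ P₂)
    (ls : ℝ) (hls : ls ∈ Set.Icc (0:ℝ) 1)
    (hchern : kl (tilt P₁ P₂ ls) P₁ = kl (tilt P₁ P₂ ls) P₂)
    (γ : ℝ) (hγ0 : 0 < γ) (hγD : γ < kl (tilt P₁ P₂ ls) P₁)
    (k : ℕ) (hk : 0 < k)
    (hkstar : max (kl P₂ P₁ / kl (tilt P₁ P₂ ls) P₁)
        (kl P₁ P₂ / kl (tilt P₁ P₂ ls) P₁) ≤ (k : ℝ))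
    (l₁ l₂ : ℝ)
    (hl₁ : l₁ ∈ Set.Icc (0:ℝ) 1) (hl₂ : l₂ ∈ Set.Icc (0:ℝ) 1)
    (hg1 : kl (tilt P₁ P₂ l₁) P₂ = γ) (hg2 : kl (tilt P₁ P₂ l₂) P₁ = γ) :
    Filter.limsup (fun n : ℕ =>
        Real.log (prodProb P₁ (twoPhaseA2 P₁ P₂ k n
          (kl (tilt P₁ P₂ l₂) P₂ - kl (tilt P₁ P₂ l₂) P₁)
          (kl (tilt P₁ P₂ l₁) P₂ - kl (tilt P₁ P₂ l₁) P₁)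
          (kl (tilt P₁ P₂ ls) P₂ - kl (tilt P₁ P₂ ls) P₁))) / (n : ℝ))
      Filter.atTop ≤ -(E1exp P₁ P₂ γ) ∧
    Filter.limsup (fun n : ℕ =>
        Real.log (prodProb P₂ (twoPhaseA1 P₁ P₂ k n
          (kl (tilt P₁ P₂ l₂) P₂ - kl (tilt P₁ P₂ l₂) P₁)
          (kl (tilt P₁ P₂ l₁) P₂ - kl (tilt P₁ P₂ l₁) P₁)
          (kl (tilt P₁ P₂ ls) P₂ - kl (tilt P₁ P₂ ls) P₁))) / (n : ℝ))
      Filter.atTop ≤ -(E2exp P₁ P₂ γ) ∧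
    ∀ E₁ E₂ : ℝ, 0 ≤ E₁ → E₁ ≤ E1exp P₁ P₂ γ → 0 ≤ E₂ → E₂ ≤ E2exp P₁ P₂ γ →
      ∀ δ : ℝ, 0 < δ → ∃ n₀ : ℕ, ∀ n : ℕ, n₀ ≤ n →
        prodProb P₁ (twoPhaseA2 P₁ P₂ k n
            (kl (tilt P₁ P₂ l₂) P₂ - kl (tilt P₁ P₂ l₂) P₁)
            (kl (tilt P₁ P₂ l₁) P₂ - kl (tilt P₁ P₂ l₁) P₁)
            (kl (tilt P₁ P₂ ls) P₂ - kl (tilt P₁ P₂ ls) P₁))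
          ≤ Real.exp (-((E₁ - δ) * n)) ∧
        prodProb P₂ (twoPhaseA1 P₁ P₂ k n
            (kl (tilt P₁ P₂ l₂) P₂ - kl (tilt P₁ P₂ l₂) P₁)
            (kl (tilt P₁ P₂ l₁) P₂ - kl (tilt P₁ P₂ l₁) P₁)
            (kl (tilt P₁ P₂ ls) P₂ - kl (tilt P₁ P₂ ls) P₁))
          ≤ Real.exp (-((E₂ - δ) * n)) :=
  twoPhase_achieves_corner_general P₁ P₂ h1pos h2pos h1sum h2sum ls hls hchern γ hγ0 hγD k hk hkstar
    l₁ l₂ hl₁ hl₂ hg1 hg2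
end

section
/- Let γ > 0, c > 0, and l ∈ ℤ⁺, and for each n ∈ ℕ let τ_n be a random variable on a probability space with n ≤ τ_n ≤ c·n^l almost surely and P(τ_n ≠ n) ≤ e^{−γn}. Then for every real m ≥ 1, lim_{n→∞} E[(τ_n/n)^m] = 1, and lim_{n→∞} Var(τ_n) = 0. -/
/-!
On the event `{τ_n = n}` any function of `τ_n` takes its value at `n`; on the complement, of
probability at most `e^{-γn}`, the bound `τ_n ≤ c n^l` controls it. Hence
`|E[(τ_n/n)^m] - 1|` and `Var(τ_n) = Var(τ_n - n) ≤ E[(τ_n - n)^2]` are both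
`O(n^{lm} e^{-γn})`, and polynomial growth loses against exponential decay.
-/

open MeasureTheory Filter ProbabilityTheory Real

section
variable {Ω : Type*} [MeasurableSpace Ω] {μ : Measure Ω} [IsProbabilityMeasure μ]
  {X : Ω → ℝ} {x₀ : ℝ}

lemma abs_integral_comp_sub_le (hX : Measurable X) {g : ℝ → ℝ} (hg : Measurable g)
    {I : Set ℝ} {M : ℝ} (hXI : ∀ᵐ ω ∂μ, X ω ∈ I) (hgI : ∀ x ∈ I, |g x - g x₀| ≤ M) :
    |∫ ω, g (X ω) ∂μ - g x₀| ≤ M * μ.real {ω | X ω ≠ x₀} := by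
  have hint : Integrable (fun ω => g (X ω)) μ := by
    refine Integrable.of_bound (hg.comp hX).aestronglyMeasurable (|g x₀| + M) ?_
    filter_upwards [hXI] with ω hω
    have := abs_sub_abs_le_abs_sub (g (X ω)) (g x₀)
    rw [Real.norm_eq_abs]
    linarith [hgI _ hω]
  have hcompl : ∀ ω ∉ {ω | X ω ≠ x₀}, g (X ω) - g x₀ = 0 := fun ω hω => by
    rw [not_not.1 hω, sub_self]
  calc |∫ ω, g (X ω) ∂μ - g x₀| = ‖∫ ω in {ω | X ω ≠ x₀}, (g (X ω) - g x₀) ∂μ‖ := by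
        rw [setIntegral_eq_integral_of_forall_compl_eq_zero hcompl,
          integral_sub hint (integrable_const _), integral_const, probReal_univ, one_smul,
          Real.norm_eq_abs]
    _ ≤ M * μ.real {ω | X ω ≠ x₀} := by
        refine norm_setIntegral_le_of_norm_le_const_ae' (measure_lt_top _ _) ?_
        filter_upwards [hXI] with ω hω _ using hgI _ hω

lemma abs_integral_div_rpow_sub_one_le (hX : Measurable X) (hx₀ : 1 ≤ x₀) {B m : ℝ}
    (hm : 0 ≤ m) (hXB : ∀ᵐ ω ∂μ, X ω ∈ Set.Icc x₀ B) :
    |∫ ω, (X ω / x₀) ^ m ∂μ - 1| ≤ B ^ m * μ.real {ω | X ω ≠ x₀} := by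
  have hx₀_pos : 0 < x₀ := by linarith
  have key := abs_integral_comp_sub_le (x₀ := x₀) (M := B ^ m) (g := fun x => (x / x₀) ^ m)
    hX (by fun_prop) hXB ?_
  · simpa [div_self hx₀_pos.ne'] using key
  rintro x ⟨hx₀x, hxB⟩
  have hx_ge_one : 1 ≤ x / x₀ := (one_le_div hx₀_pos).2 hx₀x
  have hxB' : x / x₀ ≤ B := (div_le_self (by linarith) hx₀).trans hxB
  have hone : 1 ≤ (x / x₀) ^ m := one_le_rpow hx_ge_one hm
  have hle : (x / x₀) ^ m ≤ B ^ m := rpow_le_rpow (by linarith) hxB' hm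
  simp only [div_self hx₀_pos.ne', one_rpow]
  rw [abs_of_nonneg (by linarith)]
  linarith

lemma variance_le_sq_mul_measureReal_ne (hX : Measurable X) (hx₀ : 0 ≤ x₀) {B : ℝ}
    (hXB : ∀ᵐ ω ∂μ, X ω ∈ Set.Icc x₀ B) :
    variance X μ ≤ B ^ 2 * μ.real {ω | X ω ≠ x₀} := by
  have key := abs_integral_comp_sub_le (x₀ := x₀) (M := B ^ 2) (g := fun x => (x - x₀) ^ 2)
    hX (by fun_prop) hXB ?_
  · calc variance X μ = variance (fun ω => X ω - x₀) μ :=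
          (variance_sub_const hX.aestronglyMeasurable x₀).symm
      _ ≤ ∫ ω, (X ω - x₀) ^ 2 ∂μ := variance_le_expectation_sq (by fun_prop)
      _ ≤ B ^ 2 * μ.real {ω | X ω ≠ x₀} := by
          simpa using (le_abs_self _).trans key
  rintro x ⟨hx₀x, hxB⟩
  rw [sub_self, zero_pow two_ne_zero, sub_zero, abs_of_nonneg (sq_nonneg _)]
  nlinarith

end

lemma tendsto_mul_pow_rpow_mul_exp_neg {c : ℝ} (hc : 0 ≤ c) (l : ℕ) (m : ℝ) {γ : ℝ}
    (hγ : 0 < γ) :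
    Tendsto (fun n : ℕ => (c * (n : ℝ) ^ l) ^ m * exp (-(γ * n))) atTop (nhds 0) := by
  have h := ((tendsto_rpow_mul_exp_neg_mul_atTop_nhds_zero (l * m) γ hγ).comp
    tendsto_natCast_atTop_atTop).const_mul (c ^ m)
  rw [mul_zero] at h
  refine h.congr fun n => ?_
  simp only [Function.comp_apply, neg_mul]
  rw [mul_rpow hc (by positivity), ← rpow_natCast, ← rpow_mul n.cast_nonneg, mul_assoc]

theorem afl_tau_moments_general (γ c : ℝ) (hγ : 0 < γ) (hc : 0 < c) (l : ℕ)
    (Ω : ℕ → Type*) [∀ n, MeasurableSpace (Ω n)]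
    (μ : ∀ n, Measure (Ω n)) [∀ n, IsProbabilityMeasure (μ n)]
    (τ : ∀ n, Ω n → ℝ) (hmeas : ∀ n : ℕ, Measurable (τ n))
    (hbound : ∀ n : ℕ, ∀ᵐ ω ∂(μ n), (n : ℝ) ≤ τ n ω ∧ τ n ω ≤ c * (n : ℝ) ^ l)
    (htail : ∀ n : ℕ, μ n {ω | τ n ω ≠ (n : ℝ)} ≤ ENNReal.ofReal (Real.exp (-(γ * n)))) :
    (∀ m : ℝ, 1 ≤ m →
      Tendsto (fun n : ℕ => ∫ ω, (τ n ω / n) ^ m ∂(μ n)) atTop (nhds 1)) ∧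
    Tendsto (fun n : ℕ =>
        (∫ ω, (τ n ω) ^ 2 ∂(μ n)) - (∫ ω, τ n ω ∂(μ n)) ^ 2) atTop (nhds 0) := by
  have hprob_ne (n : ℕ) : (μ n).real {ω | τ n ω ≠ n} ≤ exp (-(γ * n)) :=
    ENNReal.toReal_le_of_le_ofReal (exp_pos _).le (htail n)
  constructor
  · intro m hm
    rw [tendsto_iff_norm_sub_tendsto_zero]
    refine squeeze_zero' (.of_forall fun n => norm_nonneg _) ?_
      (tendsto_mul_pow_rpow_mul_exp_neg hc.le l m hγ)
    filter_upwards [eventually_ge_atTop 1] with n hn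
    calc ‖∫ ω, (τ n ω / n) ^ m ∂(μ n) - 1‖
        ≤ (c * (n : ℝ) ^ l) ^ m * (μ n).real {ω | τ n ω ≠ n} :=
          abs_integral_div_rpow_sub_one_le (hmeas n) (by exact_mod_cast hn) (by linarith)
            (hbound n)
      _ ≤ (c * (n : ℝ) ^ l) ^ m * exp (-(γ * n)) := by gcongr; exact hprob_ne n
  · have hvar (n : ℕ) :
        ∫ ω, τ n ω ^ 2 ∂(μ n) - (∫ ω, τ n ω ∂(μ n)) ^ 2 = variance (τ n) (μ n) := by
      rw [variance_eq_sub (memLp_of_bounded (hbound n) (hmeas n).aestronglyMeasurable 2)]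
      rfl
    simp_rw [hvar]
    refine squeeze_zero (fun n => variance_nonneg _ _) (fun n => ?_)
      (tendsto_mul_pow_rpow_mul_exp_neg hc.le l 2 hγ)
    calc variance (τ n) (μ n) ≤ (c * (n : ℝ) ^ l) ^ 2 * (μ n).real {ω | τ n ω ≠ n} :=
          variance_le_sq_mul_measureReal_ne (hmeas n) n.cast_nonneg (hbound n)
      _ ≤ (c * (n : ℝ) ^ l) ^ (2 : ℝ) * exp (-(γ * n)) := by
          rw [rpow_two]; gcongr; exact hprob_ne n

/-- Lemma 2: if the stopping time `τ_n` of a γ-almost-fixed-length test satisfies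
`n ≤ τ_n ≤ c n^l` a.s. and `P(τ_n ≠ n) ≤ e^{−γn}`, then all moments of `τ_n/n`
converge to 1 and the variance of `τ_n` converges to 0. -/
theorem afl_tau_moments (γ c : ℝ) (hγ : 0 < γ) (hc : 0 < c) (l : ℕ) (hl : 0 < l)
    (Ω : ℕ → Type*) [∀ n, MeasurableSpace (Ω n)]
    (μ : ∀ n, Measure (Ω n)) [∀ n, IsProbabilityMeasure (μ n)]
    (τ : ∀ n, Ω n → ℝ) (hmeas : ∀ n : ℕ, Measurable (τ n))
    (hbound : ∀ n : ℕ, ∀ᵐ ω ∂(μ n), (n : ℝ) ≤ τ n ω ∧ τ n ω ≤ c * (n : ℝ) ^ l)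
    (htail : ∀ n : ℕ, μ n {ω | τ n ω ≠ (n : ℝ)} ≤ ENNReal.ofReal (Real.exp (-(γ * n)))) :
    (∀ m : ℝ, 1 ≤ m →
      Tendsto (fun n : ℕ => ∫ ω, (τ n ω / n) ^ m ∂(μ n)) atTop (nhds 1)) ∧
    Tendsto (fun n : ℕ =>
        (∫ ω, (τ n ω) ^ 2 ∂(μ n)) - (∫ ω, τ n ω ∂(μ n)) ^ 2) atTop (nhds 0) :=
  afl_tau_moments_general γ c hγ hc l Ω μ τ hmeas hbound htail
end
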